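/- arXiv:2304.13801 — 2 statements merged into one kernel-verified Lean document; each statement's English description precedes it below -/
import Mathlib

section
/- Let q be a power of a prime p, and let d be a divisor of q-1 with d > 1 such that (q-1)/d ≤ 2p/3. If A, B ⊆ F_q satisfy A + B = S_d, then |A| · |B| = (q-1)/d (in particular all sums a + b with a ∈ A, b ∈ B are distinct). Moreover, if additionally (q-1)/d is a prime number, then there is no decomposition A + B = S_d with |A| ≥ 2 and |B| ≥ 2. -/
/-!
Every sum `a + b` with `a ∈ A`, `b ∈ B` lies in `S_d`, hence is a root of `X ^ N - 1` for
`N = (q - 1) / d = |S_d|`. Since `|S_d| = |A + B| ≤ |A| |B|`, it suffices to show `|A| |B| ≤ N`,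
and this is Stepanov's method. For `B' ⊆ B` pick weights `c` with
`∑ b ∈ B', c b * (a + b) ^ e = [e = |B'| - 1]` for all `a` and `e < |B'|` (Lagrange interpolation).
Then `∑ b ∈ B', c b * (X + b) ^ (N + |B'| - 1) - 1` has degree at most `N`, has
`X ^ N`-coefficient `(N + |B'| - 1).choose N`, which is nonzero when `N + |B'| ≤ p`, and vanishes
to order `|B'|` at every `a ∈ A` because `(a + b) ^ N = 1`. So `|A| |B'| ≤ N`. Taking
`|B'| = N / |A| + 1` contradicts `N < |A| |B|`; the hypothesis `3 N ≤ 2 p` makes this size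
admissible unless `p = 3` and `|A| = |B| = N = 2`, a case settled by hand.
-/

open Polynomial
open Pointwise

section

variable {F : Type*} [Field F]

theorem Polynomial.card_mul_le_natDegree_of_X_sub_C_pow_dvd {f : F[X]} (hf : f ≠ 0)
    {s : Finset F} {n : ℕ} (h : ∀ a ∈ s, (X - C a) ^ n ∣ f) : s.card * n ≤ f.natDegree := by
  have hprod : ∏ a ∈ s, (X - C a) ^ n ∣ f :=
    Finset.prod_dvd_of_coprime
      (fun a _ b _ hab => ((pairwise_coprime_X_sub_C Function.injective_id) hab).pow) h
  calc s.card * n = (∏ a ∈ s, (X - C a) ^ n).natDegree := by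
        rw [natDegree_prod _ _ fun a _ => pow_ne_zero _ (X_sub_C_ne_zero a)]
        simp
    _ ≤ f.natDegree := natDegree_le_of_dvd hprod hf

theorem exists_sum_mul_eval_eq_coeff (s : Finset F) :
    ∃ c : F → F, ∀ f : F[X], f.degree < s.card →
      ∑ b ∈ s, c b * f.eval b = f.coeff (s.card - 1) := by
  classical
  refine ⟨fun b => (Lagrange.basis s id b).coeff (s.card - 1), fun f hf => ?_⟩
  conv_rhs => rw [Lagrange.eq_interpolate (Set.injOn_id _) hf, Lagrange.interpolate_apply]
  simp [mul_comm]

theorem exists_sum_mul_add_pow_eq (s : Finset F) :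
    ∃ c : F → F, ∀ a : F, ∀ e < s.card,
      ∑ b ∈ s, c b * (a + b) ^ e = if e = s.card - 1 then 1 else 0 := by
  obtain ⟨c, hc⟩ := exists_sum_mul_eval_eq_coeff s
  refine ⟨c, fun a e he => ?_⟩
  have hdeg : ((X + C a) ^ e).degree < (s.card : WithBot ℕ) := by
    rw [degree_pow, degree_X_add_C, nsmul_one]; exact_mod_cast he
  have := hc _ hdeg
  simp only [eval_pow, eval_add, eval_X, eval_C, coeff_X_add_C_pow, add_comm _ a] at this
  rw [this]
  split_ifs with h
  · simp [h]
  · rw [Nat.choose_eq_zero_of_lt (by omega), Nat.cast_zero, mul_zero]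

noncomputable def stepanovPoly (B : Finset F) (c : F → F) (N : ℕ) : F[X] :=
  ∑ b ∈ B, C (c b) * (X + C b) ^ (N + B.card - 1) - 1

section Stepanov

variable {B : Finset F} {c : F → F} {N : ℕ}

theorem coeff_taylor_stepanovPoly (a : F) (j : ℕ) :
    (taylor a (stepanovPoly B c N)).coeff j =
      (N + B.card - 1).choose j * ∑ b ∈ B, c b * (a + b) ^ (N + B.card - 1 - j) -
        if j = 0 then 1 else 0 := by
  simp only [stepanovPoly, map_sub, map_sum, taylor_mul, taylor_C, taylor_pow, taylor_one,
    coeff_sub, finsetSum_coeff, coeff_C_mul, coeff_C, Finset.mul_sum]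
  congr 1
  refine Finset.sum_congr rfl fun b _ => ?_
  rw [map_add, taylor_X, taylor_C, add_assoc, ← C_add, coeff_X_add_C_pow]
  ring

variable (hc : ∀ a : F, ∀ e < B.card,
  ∑ b ∈ B, c b * (a + b) ^ e = if e = B.card - 1 then 1 else 0)
include hc

theorem coeff_stepanovPoly_of_le (hB : B.Nonempty) {q : ℕ} (hNq : N ≤ q) (hq : q ≠ 0) :
    (stepanovPoly B c N).coeff q = if q = N then ((N + B.card - 1).choose N : F) else 0 := by
  have := coeff_taylor_stepanovPoly (B := B) (c := c) (N := N) 0 q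
  simp only [taylor_zero, zero_add, if_neg hq, sub_zero] at this
  rw [this]
  have := hB.card_pos
  rcases Nat.lt_or_ge (N + B.card - 1) q with hMq | hqM
  · rw [Nat.choose_eq_zero_of_lt hMq, if_neg (by omega), Nat.cast_zero, zero_mul]
  · have hsum := hc 0 (N + B.card - 1 - q) (by omega)
    simp only [zero_add] at hsum
    rw [hsum]
    by_cases hqN : q = N
    · rw [if_pos (by omega), if_pos hqN, hqN, mul_one]
    · rw [if_neg (by omega), if_neg hqN, mul_zero]

theorem natDegree_stepanovPoly_le (hB : B.Nonempty) : (stepanovPoly B c N).natDegree ≤ N :=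
  natDegree_le_iff_coeff_eq_zero.mpr fun q hq => by
    rw [coeff_stepanovPoly_of_le hc hB hq.le (by omega), if_neg (by omega)]

theorem coeff_stepanovPoly_self (hB : B.Nonempty) (hN : N ≠ 0) :
    (stepanovPoly B c N).coeff N = (N + B.card - 1).choose N := by
  rw [coeff_stepanovPoly_of_le hc hB le_rfl hN, if_pos rfl]

theorem X_sub_C_pow_dvd_stepanovPoly {a : F} (ha : ∀ b ∈ B, (a + b) ^ N = 1) :
    (X - C a) ^ B.card ∣ stepanovPoly B c N := by
  rw [X_sub_C_pow_dvd_iff, ← taylor_apply, X_pow_dvd_iff]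
  intro j hj
  have hpow : ∑ b ∈ B, c b * (a + b) ^ (N + B.card - 1 - j) =
      ∑ b ∈ B, c b * (a + b) ^ (B.card - 1 - j) :=
    Finset.sum_congr rfl fun b hb => by
      rw [show N + B.card - 1 - j = N + (B.card - 1 - j) by omega, pow_add, ha b hb, one_mul]
  rw [coeff_taylor_stepanovPoly, hpow, hc a _ (by omega)]
  rcases eq_or_ne j 0 with rfl | hj0
  · simp
  · rw [if_neg (by omega), if_neg hj0, mul_zero, sub_zero]

end Stepanov

theorem card_mul_card_le_of_add_pow_eq_one_of_add_card_le (p : ℕ) [CharP F p] {N : ℕ}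
    (hN : N ≠ 0) {A B : Finset F} (hAB : ∀ a ∈ A, ∀ b ∈ B, (a + b) ^ N = 1)
    (hNp : N + B.card ≤ p) : A.card * B.card ≤ N := by
  obtain rfl | hB := B.eq_empty_or_nonempty
  · simp
  obtain ⟨c, hc⟩ := exists_sum_mul_add_pow_eq B
  have hchoose : ((N + B.card - 1).choose N : F) ≠ 0 := by
    rw [Ne, CharP.cast_eq_zero_iff F p]
    have hp : p.Prime := CharP.char_prime_of_ne_zero F (by omega)
    have := hB.card_pos
    exact hp.coprime_iff_not_dvd.mp (hp.coprime_choose_of_lt (by omega) (by omega))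
  have hf : stepanovPoly B c N ≠ 0 := fun h0 =>
    hchoose (by simpa [h0] using (coeff_stepanovPoly_self hc hB hN).symm)
  calc A.card * B.card ≤ (stepanovPoly B c N).natDegree :=
        card_mul_le_natDegree_of_X_sub_C_pow_dvd hf fun a ha =>
          X_sub_C_pow_dvd_stepanovPoly hc (hAB a ha)
    _ ≤ N := natDegree_stepanovPoly_le hc hB

theorem eq_of_add_sq_eq_one (h2 : (2 : F) ≠ 0) {a a' b b' : F} (hb : b ≠ b')
    (hab : (a + b) ^ 2 = 1) (hab' : (a + b') ^ 2 = 1)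
    (ha'b : (a' + b) ^ 2 = 1) (ha'b' : (a' + b') ^ 2 = 1) : a = a' := by
  have hsub : b - b' ≠ 0 := sub_ne_zero.mpr hb
  have ha : 2 * a + (b + b') = 0 :=
    (mul_eq_zero.mp (by linear_combination hab - hab')).resolve_left hsub
  have ha' : 2 * a' + (b + b') = 0 :=
    (mul_eq_zero.mp (by linear_combination ha'b - ha'b')).resolve_left hsub
  exact mul_left_cancel₀ h2 (by linear_combination ha - ha')

theorem card_mul_card_le_of_add_pow_eq_one (p : ℕ) [CharP F p] {N : ℕ} (hN : N ≠ 0)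
    {A B : Finset F} (hAB : ∀ a ∈ A, ∀ b ∈ B, (a + b) ^ N = 1) (hNp : 3 * N ≤ 2 * p) :
    A.card * B.card ≤ N := by
  wlog hBA : B.card ≤ A.card generalizing A B
  · rw [mul_comm]
    exact this (fun b hb a ha => add_comm a b ▸ hAB a ha b hb) (by omega)
  by_contra! hlt
  have hA : 0 < A.card := Nat.pos_of_mul_pos_right (hlt.trans_le' (Nat.zero_le _))
  have htB : N / A.card + 1 ≤ B.card := (Nat.div_lt_iff_lt_mul hA).mpr (by linarith)
  by_cases hNtp : N + (N / A.card + 1) ≤ p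
  · obtain ⟨B', hB'B, hB't⟩ := Finset.exists_subset_card_eq htB
    have := card_mul_card_le_of_add_pow_eq_one_of_add_card_le p hN
      (fun a ha b hb => hAB a ha b (hB'B hb)) (hB't ▸ hNtp)
    rw [hB't] at this
    exact (Nat.lt_mul_div_succ N hA).not_ge this
  have hA3 : A.card < 3 := by
    by_contra! h3
    have : N / A.card ≤ N / 3 := Nat.div_le_div_left h3 (by norm_num)
    omega
  have h22 : A.card = 2 ∧ B.card = 2 ∧ N = 2 ∧ p = 3 := by
    obtain h | h : A.card = 1 ∨ A.card = 2 := by omega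
    all_goals rw [h] at hlt hNtp hBA; omega
  obtain ⟨hA2, hB2, rfl, rfl⟩ := h22
  have h2 : (2 : F) ≠ 0 := Ring.two_ne_zero (by rw [ringChar.eq F 3]; norm_num)
  classical
  obtain ⟨a, a', haa', rfl⟩ := Finset.card_eq_two.mp hA2
  obtain ⟨b, b', hbb', rfl⟩ := Finset.card_eq_two.mp hB2
  exact haa' (eq_of_add_sq_eq_one h2 hbb' (hAB a (by simp) b (by simp))
    (hAB a (by simp) b' (by simp)) (hAB a' (by simp) b (by simp)) (hAB a' (by simp) b' (by simp)))

theorem card_image_pow_units [Fintype F] [DecidableEq F] {d : ℕ} (hd : d ∣ Fintype.card F - 1) :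
    (Finset.univ.image fun x : Fˣ => (x : F) ^ d).card = (Fintype.card F - 1) / d := by
  have himage : (Finset.univ.image fun x : Fˣ => (x : F) ^ d) =
      (Finset.univ.image fun x : Fˣ => x ^ d).image Units.val := by
    rw [Finset.image_image]; rfl
  rw [himage, Finset.card_image_of_injective _ Units.val_injective, ← Set.toFinset_range,
    Set.toFinset_card, ← Nat.card_eq_fintype_card]
  change Nat.card (powMonoidHom d : Fˣ →* Fˣ).range = _
  rw [IsCyclic.card_powMonoidHom_range, Nat.card_units, Nat.card_eq_fintype_card,
    Nat.gcd_eq_right hd]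

end

theorem stmt_1_general (p n q : ℕ) (hp : p.Prime) (hq : q = p ^ n)
    (F : Type) [Field F] [Fintype F] [DecidableEq F] (hF : Fintype.card F = q)
    (d : ℕ) (hd : d ∣ q - 1)
    (hsmall : 3 * ((q - 1) / d) ≤ 2 * p) :
    (∀ A B : Finset F,
      A + B = Finset.image (fun x : Fˣ => ((x : F) ^ d)) Finset.univ →
      A.card * B.card = (q - 1) / d) ∧
    (Nat.Prime ((q - 1) / d) →
      ∀ A B : Finset F,
        A + B = Finset.image (fun x : Fˣ => ((x : F) ^ d)) Finset.univ →
        ¬ (2 ≤ A.card ∧ 2 ≤ B.card)) := by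
  have : Fact p.Prime := ⟨hp⟩
  have : CharP F p := charP_of_card_eq_prime_pow (hF.trans hq)
  subst hF
  have hN : (Fintype.card F - 1) / d ≠ 0 :=
    (Nat.div_pos (Nat.le_of_dvd (by simp [Fintype.one_lt_card]) hd)
      (Nat.pos_of_dvd_of_pos hd (by simp [Fintype.one_lt_card]))).ne'
  have hpow : ∀ x : Fˣ, ((x : F) ^ d) ^ ((Fintype.card F - 1) / d) = 1 := fun x => by
    rw [← pow_mul, Nat.mul_div_cancel' hd, FiniteField.pow_card_sub_one_eq_one _ x.ne_zero]
  have hcard : ∀ A B : Finset F, A + B = Finset.image (fun x : Fˣ => ((x : F) ^ d)) Finset.univ →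
      A.card * B.card = (Fintype.card F - 1) / d := fun A B hAB => by
    refine le_antisymm (card_mul_card_le_of_add_pow_eq_one p hN (fun a ha b hb => ?_) hsmall) ?_
    · obtain ⟨x, -, hx⟩ := Finset.mem_image.mp (hAB ▸ Finset.add_mem_add ha hb)
      rw [← hx, hpow]
    · rw [← card_image_pow_units hd, ← hAB]
      exact Finset.card_add_le
  exact ⟨hcard, fun hprime A B hAB hge =>
    Nat.not_prime_mul (by omega) (by omega) (hcard A B hAB ▸ hprime)⟩

/-- Let `q = p^n` be a prime power and `d ∣ q-1` with `d > 1` such that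
`(q-1)/d ≤ 2p/3`. If `A + B = S_d` then `|A|·|B| = (q-1)/d`; moreover, if `(q-1)/d` is
prime, then there is no such decomposition with `|A|, |B| ≥ 2`. -/
theorem stmt_1 (p n q : ℕ) (hp : p.Prime) (hn : 0 < n) (hq : q = p ^ n)
    (F : Type) [Field F] [Fintype F] [DecidableEq F] (hF : Fintype.card F = q)
    (d : ℕ) (hd : d ∣ q - 1) (hd1 : 1 < d)
    (hsmall : 3 * ((q - 1) / d) ≤ 2 * p) :
    (∀ A B : Finset F,
      A + B = Finset.image (fun x : Fˣ => ((x : F) ^ d)) Finset.univ →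
      A.card * B.card = (q - 1) / d) ∧
    (Nat.Prime ((q - 1) / d) →
      ∀ A B : Finset F,
        A + B = Finset.image (fun x : Fˣ => ((x : F) ^ d)) Finset.univ →
        ¬ (2 ≤ A.card ∧ 2 ≤ B.card)) :=
  stmt_1_general p n q hp hq F hF d hd hsmall
end

section
/- Let q be a power of a prime p, and let d be a divisor of q-1 with d > 1. Suppose A, B ⊆ F_q satisfy A + B = S_d with |A| ≥ 2 and |B| ≥ 2. Then exactly one of the following holds: either |A| · |B| = (q-1)/d (all sums a + b are distinct), or |A| · |B| > (q-1)/d and both binomial coefficients C(|A| - 1 + (q-1)/d, (q-1)/d) and C(|B| - 1 + (q-1)/d, (q-1)/d) are divisible by p. -/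
/-!
This is the Hanson–Petridis argument. Let `k = |A|`, `m = (q - 1) / d`, and let
`w a = ∏_{a' ≠ a} (a - a')⁻¹` be the Lagrange weights of the nodes `A`, so that
`∑ a, w a * a ^ i = [i = k - 1]` for `i < k`. Then `P = ∑ a, w a * (X + a) ^ (m + k - 1) - 1` has
degree at most `m`, and its coefficient of `X ^ m` is `C(k - 1 + m, m)`, so `P ≠ 0` unless `p`
divides this binomial coefficient. Every `a + b` lies in `S_d`, so it is an `m`-th root of unity.
Hence the first `k` Taylor coefficients of `P` at each `b ∈ B` vanish, so `∏_{b ∈ B} (X - b) ^ k`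
divides `P`, which gives `|A| |B| ≤ m`. On the other hand `m ≤ |S_d| = |A + B| ≤ |A| |B|`.
-/

open Pointwise Polynomial Finset Lagrange

section Interpolation

variable {F : Type*} [Field F] [DecidableEq F]

theorem coeff_basis_card_sub_one {A : Finset F} {a : F} (ha : a ∈ A) :
    (Lagrange.basis A id a).coeff (#A - 1) = nodalWeight A id a := by
  have hnodal : (nodal (A.erase a) id).natDegree = #A - 1 := by
    rw [natDegree_nodal, card_erase_of_mem ha]
  rw [basis_eq_prod_sub_inv_mul_nodal_div ha, ← nodal_erase_eq_nodal_div ha, coeff_C_mul,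
    ← hnodal, nodal_monic.coeff_natDegree, mul_one]

/-- Every polynomial of degree `< #A` equals its Lagrange interpolant on `A`; compare the
coefficients of degree `#A - 1`. -/
theorem sum_nodalWeight_mul_eval (A : Finset F) {f : F[X]} (hf : f.degree < #A) :
    ∑ a ∈ A, nodalWeight A id a * f.eval a = f.coeff (#A - 1) := by
  conv_rhs => rw [eq_interpolate (s := A) (v := id) Function.injective_id.injOn hf]
  rw [interpolate_apply, finsetSum_coeff]
  refine sum_congr rfl fun a ha => ?_
  rw [coeff_C_mul, coeff_basis_card_sub_one ha, mul_comm, id]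

theorem sum_nodalWeight_mul_pow (A : Finset F) {i : ℕ} (hi : i < #A) :
    ∑ a ∈ A, nodalWeight A id a * a ^ i = if i = #A - 1 then 1 else 0 := by
  have hdeg : ((X : F[X]) ^ i).degree < #A := by rw [degree_X_pow]; exact_mod_cast hi
  simpa [coeff_X_pow, eq_comm] using sum_nodalWeight_mul_eval A hdeg

end Interpolation

theorem coeff_sum_C_mul_X_add_C_pow {ι R : Type*} [CommSemiring R] (s : Finset ι) (w v : ι → R)
    (N t : ℕ) :
    (∑ i ∈ s, C (w i) * (X + C (v i)) ^ N).coeff t = N.choose t * ∑ i ∈ s, w i * v i ^ (N - t) := by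
  rw [finsetSum_coeff, mul_sum]
  refine sum_congr rfl fun i _ => ?_
  rw [coeff_C_mul, coeff_X_add_C_pow]
  ring

section HansonPetridis

variable {F : Type*} [Field F] [DecidableEq F]

noncomputable def hansonPetridisPoly (A : Finset F) (N : ℕ) : F[X] :=
  ∑ a ∈ A, C (nodalWeight A id a) * (X + C a) ^ N - 1

theorem coeff_hansonPetridisPoly (A : Finset F) (N : ℕ) {t : ℕ} (ht : t ≠ 0) :
    (hansonPetridisPoly A N).coeff t = N.choose t * ∑ a ∈ A, nodalWeight A id a * a ^ (N - t) := by
  rw [hansonPetridisPoly, coeff_sub, coeff_sum_C_mul_X_add_C_pow, coeff_one, if_neg ht, sub_zero]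

variable {A : Finset F} {m : ℕ}

theorem natDegree_hansonPetridisPoly_le :
    (hansonPetridisPoly A (m + (#A - 1))).natDegree ≤ m := by
  refine natDegree_le_iff_coeff_eq_zero.mpr fun t hmt => ?_
  rw [coeff_hansonPetridisPoly _ _ (by omega)]
  rcases le_or_gt t (m + (#A - 1)) with hle | hlt
  · rw [sum_nodalWeight_mul_pow A (by omega), if_neg (by omega), mul_zero]
  · rw [Nat.choose_eq_zero_of_lt hlt, Nat.cast_zero, zero_mul]

theorem coeff_hansonPetridisPoly_self (hm : m ≠ 0) (hA : A.Nonempty) :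
    (hansonPetridisPoly A (m + (#A - 1))).coeff m = (m + (#A - 1)).choose m := by
  have hk := hA.card_pos
  rw [coeff_hansonPetridisPoly _ _ hm, Nat.add_sub_cancel_left,
    sum_nodalWeight_mul_pow A (by omega), if_pos rfl, mul_one]

theorem X_sub_C_pow_dvd_hansonPetridisPoly {b : F} (hb : ∀ a ∈ A, (a + b) ^ m = 1) :
    (X - C b) ^ #A ∣ hansonPetridisPoly A (m + (#A - 1)) := by
  set N := m + (#A - 1)
  have htaylor : taylor b (hansonPetridisPoly A N)
      = ∑ a ∈ A, C (nodalWeight A id a) * (X + C (a + b)) ^ N - 1 := by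
    simp [hansonPetridisPoly, taylor_pow, taylor_X, add_assoc, add_comm (C b)]
  have hX : X ^ #A ∣ taylor b (hansonPetridisPoly A N) := by
    refine X_pow_dvd_iff.mpr fun j hj => ?_
    have hshift : ∑ a ∈ A, nodalWeight A id a * (a + b) ^ (N - j)
        = ∑ a ∈ A, nodalWeight A id a * ((X + C b) ^ (#A - 1 - j)).eval a := by
      refine sum_congr rfl fun a ha => ?_
      rw [show N - j = m + (#A - 1 - j) by omega, pow_add, hb a ha, one_mul]
      simp
    have hdeg : ((X + C b) ^ (#A - 1 - j)).degree < (#A : WithBot ℕ) := by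
      rw [degree_pow, degree_X_add_C, nsmul_one]
      exact_mod_cast (by omega : #A - 1 - j < #A)
    rw [htaylor, coeff_sub, coeff_sum_C_mul_X_add_C_pow, coeff_one, hshift,
      sum_nodalWeight_mul_eval A hdeg, coeff_X_add_C_pow]
    rcases Nat.eq_zero_or_pos j with rfl | hj0
    · simp
    · rw [Nat.choose_eq_zero_of_lt (n := #A - 1 - j) (by omega), if_neg hj0.ne']
      simp
  simpa [taylor_taylor, sub_eq_add_neg] using map_dvd (taylorAlgHom (-b)) hX

theorem card_mul_card_le_of_add_pow_eq_one_s11 {B : Finset F} (hm : m ≠ 0) (hA : A.Nonempty)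
    (hAB : ∀ a ∈ A, ∀ b ∈ B, (a + b) ^ m = 1) (hchoose : ((#A - 1 + m).choose m : F) ≠ 0) :
    #A * #B ≤ m := by
  have hP : hansonPetridisPoly A (m + (#A - 1)) ≠ 0 := fun h => hchoose <| by
    rw [add_comm, ← coeff_hansonPetridisPoly_self hm hA, h, coeff_zero]
  have hcoprime : (B : Set F).Pairwise (Function.onFun IsCoprime fun b => (X - C b) ^ #A) :=
    fun _ _ _ _ hne => (pairwise_coprime_X_sub_C Function.injective_id hne).pow
  have hdvd : ∏ b ∈ B, (X - C b) ^ #A ∣ hansonPetridisPoly A (m + (#A - 1)) :=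
    prod_dvd_of_coprime hcoprime fun b hb =>
      X_sub_C_pow_dvd_hansonPetridisPoly fun a ha => hAB a ha b hb
  calc #A * #B = (∏ b ∈ B, (X - C b) ^ #A).natDegree := by
        rw [natDegree_prod _ _ fun b _ => pow_ne_zero _ (X_sub_C_ne_zero b)]
        simp [mul_comm]
    _ ≤ (hansonPetridisPoly A (m + (#A - 1))).natDegree := natDegree_le_of_dvd hdvd hP
    _ ≤ m := natDegree_hansonPetridisPoly_le

theorem dvd_choose_of_lt_card_mul_card (p : ℕ) [CharP F p] {B : Finset F} (hm : m ≠ 0)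
    (hA : A.Nonempty) (hAB : ∀ a ∈ A, ∀ b ∈ B, (a + b) ^ m = 1) (hlt : m < #A * #B) :
    p ∣ (#A - 1 + m).choose m := by
  by_contra h
  rw [← CharP.cast_eq_zero_iff F] at h
  exact hlt.not_ge (card_mul_card_le_of_add_pow_eq_one_s11 hm hA hAB h)

end HansonPetridis

section FiniteField

variable {F : Type*} [Field F] [Fintype F] [DecidableEq F]

theorem card_sub_one_le_mul_card_image_pow {d : ℕ} (hd : 0 < d) :
    Fintype.card F - 1 ≤ d * #(univ.image fun x : Fˣ => (x : F) ^ d) := by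
  rw [← Fintype.card_units, ← card_univ]
  refine card_le_mul_card_image _ d fun c _ => ?_
  calc #{x : Fˣ | (x : F) ^ d = c} ≤ #(nthRootsFinset d c) :=
        card_le_card_of_injOn (fun x : Fˣ => (x : F))
          (fun x hx => (mem_nthRootsFinset hd c).mpr (mem_filter.mp hx).2)
          (fun _ _ _ _ h => Units.ext h)
    _ ≤ d := by
        rw [nthRootsFinset_def]
        exact (Multiset.toFinset_card_le _).trans (card_nthRoots d c)

theorem pow_eq_one_of_mem_image_pow {d : ℕ} (hd : d ∣ Fintype.card F - 1) {y : F}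
    (hy : y ∈ univ.image fun x : Fˣ => (x : F) ^ d) : y ^ ((Fintype.card F - 1) / d) = 1 := by
  obtain ⟨x, -, rfl⟩ := mem_image.mp hy
  rw [← pow_mul, Nat.mul_div_cancel' hd, FiniteField.pow_card_sub_one_eq_one _ x.ne_zero]

end FiniteField

theorem stmt_11_general (p n q : ℕ) (hp : p.Prime) (hq : q = p ^ n)
    (F : Type) [Field F] [Fintype F] [DecidableEq F] (hF : Fintype.card F = q)
    (d : ℕ) (hd : d ∣ q - 1)
    (A B : Finset F)
    (hAB : A + B = Finset.image (fun x : Fˣ => ((x : F) ^ d)) Finset.univ) :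
    Xor' (A.card * B.card = (q - 1) / d)
      ((q - 1) / d < A.card * B.card ∧
        p ∣ Nat.choose (A.card - 1 + (q - 1) / d) ((q - 1) / d) ∧
        p ∣ Nat.choose (B.card - 1 + (q - 1) / d) ((q - 1) / d)) := by
  subst hF
  have : Fact p.Prime := ⟨hp⟩
  have : CharP F p := charP_of_card_eq_prime_pow hq
  set m := (Fintype.card F - 1) / d
  have hunits : 0 < Fintype.card F - 1 := Fintype.card_units (α := F) ▸ Fintype.card_pos
  have hd0 : 0 < d := Nat.pos_of_dvd_of_pos hd hunits
  have hm : 0 < m := Nat.div_pos (Nat.le_of_dvd hunits hd) hd0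
  have hsum : ∀ a ∈ A, ∀ b ∈ B, (a + b) ^ m = 1 := fun a ha b hb =>
    pow_eq_one_of_mem_image_pow hd (hAB ▸ add_mem_add ha hb)
  have hle : m ≤ #A * #B := by
    calc m ≤ #(A + B) := by
          rw [hAB]
          exact Nat.div_le_of_le_mul (card_sub_one_le_mul_card_image_pow hd0)
      _ ≤ #A * #B := card_add_le
  have hA : A.Nonempty := card_pos.mp (Nat.pos_of_mul_pos_right (hm.trans_le hle))
  have hB : B.Nonempty := card_pos.mp (Nat.pos_of_mul_pos_left (hm.trans_le hle))
  rcases hle.eq_or_lt with heq | hlt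
  · exact Or.inl ⟨heq.symm, fun h => h.1.ne heq⟩
  · refine Or.inr ⟨⟨hlt, dvd_choose_of_lt_card_mul_card p hm.ne' hA hsum hlt,
      dvd_choose_of_lt_card_mul_card p hm.ne' hB ?_ (by rwa [mul_comm])⟩, hlt.ne'⟩
    exact fun b hb a ha => add_comm a b ▸ hsum a ha b hb

/-- Let `q = p^n` be a prime power and `d ∣ q - 1` with `d > 1`.
If `A + B = S_d` with `|A|, |B| ≥ 2`, then exactly one of the following holds:
either `|A|·|B| = (q-1)/d`, or `|A|·|B| > (q-1)/d` and `p` divides both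
`C(|A| - 1 + (q-1)/d, (q-1)/d)` and `C(|B| - 1 + (q-1)/d, (q-1)/d)`. -/
theorem stmt_11 (p n q : ℕ) (hp : p.Prime) (hn : 0 < n) (hq : q = p ^ n)
    (F : Type) [Field F] [Fintype F] [DecidableEq F] (hF : Fintype.card F = q)
    (d : ℕ) (hd : d ∣ q - 1) (hd1 : 1 < d)
    (A B : Finset F)
    (hAB : A + B = Finset.image (fun x : Fˣ => ((x : F) ^ d)) Finset.univ)
    (hA : 2 ≤ A.card) (hB : 2 ≤ B.card) :
    Xor' (A.card * B.card = (q - 1) / d)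
      ((q - 1) / d < A.card * B.card ∧
        p ∣ Nat.choose (A.card - 1 + (q - 1) / d) ((q - 1) / d) ∧
        p ∣ Nat.choose (B.card - 1 + (q - 1) / d) ((q - 1) / d)) :=
  stmt_11_general p n q hp hq F hF d hd A B hAB
end
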